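/- (Theorem 2, spatial-wideband far-field FIM: exact (ψ, d, B) sub-block.) Consider the spatial wideband far-field model with phase ξ_n[k] = −nΔcos θ + k·r_f·(d_n − B), where d_n = √(d² − 2·d·n·Δ·cos θ + n²Δ²) > 0, per-antenna amplitude weight w_n = d/d_n, and exact partial derivatives ∂ξ_n[k]/∂d = k·r_f·(d − nΔcos θ)/d_n and ∂ξ_n[k]/∂B = −k·r_f. Define the Fisher information sub-matrix over (ψ, d, B) entrywise by J_{pq} = γ·Σ_{n=−N/2}^{N/2} Σ_{k=−K/2}^{K/2} |s(k)|²·w_n²·u_p(n,k)·u_q(n,k) with u(n,k) = (−λ/(2π), k·r_f·(d − nΔcos θ)/d_n, −k·r_f). Then, assuming |s(−k)| = |s(k)| for all k: J_{ψψ} = γ·(λ/(2π))²·E_{K,0}·A₀⁽⁰⁾; J_{ψd} = 0; J_{ψB} = 0; J_{dd} = γ·E_{K,2}·r_f²·(A₀⁽²⁾ − 2·(Δ/d)·cos θ·A₁⁽²⁾ + (Δ²/d²)·cos²θ·A₂⁽²⁾); J_{dB} = −γ·E_{K,2}·r_f²·(A₀⁽¹⁾ − (Δ/d)·cos θ·A₁⁽¹⁾);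 J_{BB} = γ·E_{K,2}·r_f²·A₀⁽⁰⁾. In particular, the distance information contains the additional term γ·E_{K,2}·r_f²·A₂⁽²⁾·Δ²cos²θ/d², which is large near end-fire (θ ≈ 0). -/

import Mathlib

/-! The gradient `u n k` is affine in the subcarrier index: `u n k = x + k • y n` with
`x = (-λ/2π, 0, 0)`. Summing `|s k|² u_p u_q` over the symmetric band, the cross terms carry the
first moment `∑ k |s k|²`, which vanishes because `|s|²` is even; hence
`J = γ ∑ₙ wₙ² (E_{K,0} x xᵀ + E_{K,2} yₙ yₙᵀ)` and `ψ` decouples from `(d, B)`. Writing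
`(d - nΔ cos θ)/dₙ = wₙ (1 - (Δ/d) cos θ · n)` turns the remaining sums into the `A i j`. -/

open Finset Matrix

theorem Finset.map_neg_Icc_neg_self {α : Type*} [AddCommGroup α] [PartialOrder α]
    [IsOrderedAddMonoid α] [LocallyFiniteOrder α] (m : α) :
    (Icc (-m) m).map (Equiv.neg α).toEmbedding = Icc (-m) m := by
  ext k; simp [neg_le, and_comm]

theorem sum_Icc_neg_mul_eq_zero_of_even {R : Type*} [Ring R] [IsAddTorsionFree R] (m : ℤ)
    {σ : ℤ → R} (hσ : Function.Even σ) : ∑ k ∈ Icc (-m) m, (k : R) * σ k = 0 :=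
  Function.Odd.finsetSum_eq_zero (fun k => by simp [hσ k]) (map_neg_Icc_neg_self m)

theorem sum_mul_affine_mul_affine_of_sum_mul_eq_zero {ι R : Type*} [CommRing R]
    (T : Finset ι) (σ t : ι → R) (c x y x' y' : R) (hσ : ∑ k ∈ T, t k * σ k = 0) :
    ∑ k ∈ T, σ k * c * (x + t k * y) * (x' + t k * y') =
      c * (x * x' * ∑ k ∈ T, σ k + y * y' * ∑ k ∈ T, t k ^ 2 * σ k) := by
  rw [show c * (x * x' * ∑ k ∈ T, σ k + y * y' * ∑ k ∈ T, t k ^ 2 * σ k) =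
      c * (x * x' * ∑ k ∈ T, σ k + (x * y' + y * x') * ∑ k ∈ T, t k * σ k
        + y * y' * ∑ k ∈ T, t k ^ 2 * σ k) by rw [hσ]; ring]
  simp only [mul_sum, ← sum_add_distrib]
  exact sum_congr rfl fun k _ => by ring

theorem wideband_farfield_FIM_general
    (K N : ℕ) (hK : Even K)
    (s : ℤ → ℂ) (hs : ∀ k : ℤ, ‖s (-k)‖ = ‖s k‖)
    (d θ Δ lam rf γ : ℝ) (hd : 0 < d)
    (EK0 EK2 : ℝ)
    (hEK0 : EK0 = ∑ k ∈ Finset.Icc (-(K : ℤ) / 2) ((K : ℤ) / 2),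
      (‖s k‖) ^ 2)
    (hEK2 : EK2 = ∑ k ∈ Finset.Icc (-(K : ℤ) / 2) ((K : ℤ) / 2),
      (k : ℝ) ^ 2 * (‖s k‖) ^ 2)
    -- per-antenna distances d_n > 0
    (dn : ℤ → ℝ)
    -- weighted array sums A_i⁽ʲ⁾
    (A : ℕ → ℕ → ℝ)
    (hA : ∀ i j : ℕ, A i j = ∑ n ∈ Finset.Icc (-(N : ℤ) / 2) ((N : ℤ) / 2),
      (n : ℝ) ^ i * (d / dn n) ^ (j + 2))
    -- phase gradient u(n,k) over (ψ, d, B)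
    (u : ℤ → ℤ → Fin 3 → ℝ)
    (hu : ∀ n k : ℤ, u n k =
      ![-(lam / (2 * Real.pi)),
        (k : ℝ) * rf * (d - (n : ℝ) * Δ * Real.cos θ) / dn n,
        -((k : ℝ) * rf)])
    -- Fisher information sub-matrix with amplitude weights w_n = d/d_n
    (J : Matrix (Fin 3) (Fin 3) ℝ)
    (hJ : ∀ p q : Fin 3, J p q = γ *
      ∑ n ∈ Finset.Icc (-(N : ℤ) / 2) ((N : ℤ) / 2),
        ∑ k ∈ Finset.Icc (-(K : ℤ) / 2) ((K : ℤ) / 2),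
          (‖s k‖) ^ 2 * (d / dn n) ^ 2 * u n k p * u n k q) :
    J 0 0 = γ * (lam / (2 * Real.pi)) ^ 2 * EK0 * A 0 0 ∧
    J 0 1 = 0 ∧
    J 0 2 = 0 ∧
    J 1 1 = γ * EK2 * rf ^ 2 *
      (A 0 2 - 2 * (Δ / d) * Real.cos θ * A 1 2
        + (Δ ^ 2 / d ^ 2) * (Real.cos θ) ^ 2 * A 2 2) ∧
    J 1 2 = -(γ * EK2 * rf ^ 2 * (A 0 1 - (Δ / d) * Real.cos θ * A 1 1)) ∧
    J 2 2 = γ * EK2 * rf ^ 2 * A 0 0 := by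
  have hfirst_moment : ∑ k ∈ Icc (-(K : ℤ) / 2) ((K : ℤ) / 2), (k : ℝ) * ‖s k‖ ^ 2 = 0 := by
    rw [show -(K : ℤ) / 2 = -((K : ℤ) / 2) by obtain ⟨a, ha⟩ := hK; omega]
    exact sum_Icc_neg_mul_eq_zero_of_even _ fun k => by simp [hs]
  have hrange (n : ℤ) :
      (d - n * Δ * Real.cos θ) / dn n = d / dn n * (1 - Δ / d * Real.cos θ * n) := by
    rw [div_mul_eq_mul_div]; congr 1; field_simp [hd.ne']
  set x : Fin 3 → ℝ := ![-(lam / (2 * Real.pi)), 0, 0] with hx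
  set y : ℤ → Fin 3 → ℝ := fun n => ![0, rf * (d / dn n) * (1 - Δ / d * Real.cos θ * n), -rf]
    with hy
  have hu_affine (n k : ℤ) (p : Fin 3) : u n k p = x p + k * y n p := by
    rw [hu]
    fin_cases p
    · simp [hx, hy]
    · simp only [hx, hy, Fin.mk_one, cons_val_one, cons_val_zero]
      rw [mul_div_assoc, hrange]; ring
    · simp [hx, hy]
  have hJ_decoupled (p q : Fin 3) : J p q = γ * ∑ n ∈ Icc (-(N : ℤ) / 2) ((N : ℤ) / 2),
      (d / dn n) ^ 2 * (x p * x q * EK0 + y n p * y n q * EK2) := by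
    rw [hJ, hEK0, hEK2]
    congr 1
    refine sum_congr rfl fun n _ => ?_
    simp only [hu_affine]
    exact sum_mul_affine_mul_affine_of_sum_mul_eq_zero _ _ _ _ _ _ _ _ hfirst_moment
  refine ⟨?_, ?_, ?_, ?_, ?_, ?_⟩ <;>
    simp only [hA, hJ_decoupled, hx, hy, cons_val_zero, cons_val_one, cons_val_two, tail_cons, head_cons,
      mul_zero, zero_mul, add_zero, sum_const_zero,
      mul_sum, ← sum_sub_distrib, ← sum_add_distrib, ← sum_neg_distrib] <;>
    exact sum_congr rfl fun n _ => by ring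

/-- Theorem 2: Fisher information of the spatial-wideband
far-field model, exact (ψ, d, B) sub-block, entrywise. -/
theorem wideband_farfield_FIM
    (K N : ℕ) (hK : Even K) (hN : Even N)
    (s : ℤ → ℂ) (hs : ∀ k : ℤ, ‖s (-k)‖ = ‖s k‖)
    (d θ B Δ lam rf γ : ℝ) (hd : 0 < d) (hΔ : 0 < Δ) (hlam : 0 < lam) (hγ : 0 < γ)
    (EK0 EK2 : ℝ)
    (hEK0 : EK0 = ∑ k ∈ Finset.Icc (-(K : ℤ) / 2) ((K : ℤ) / 2),
      (‖s k‖) ^ 2)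
    (hEK2 : EK2 = ∑ k ∈ Finset.Icc (-(K : ℤ) / 2) ((K : ℤ) / 2),
      (k : ℝ) ^ 2 * (‖s k‖) ^ 2)
    -- per-antenna distances d_n > 0
    (dn : ℤ → ℝ)
    (hdn : ∀ n : ℤ, dn n =
      Real.sqrt (d ^ 2 - 2 * d * (n : ℝ) * Δ * Real.cos θ + (n : ℝ) ^ 2 * Δ ^ 2))
    (hdnpos : ∀ n ∈ Finset.Icc (-(N : ℤ) / 2) ((N : ℤ) / 2), 0 < dn n)
    -- weighted array sums A_i⁽ʲ⁾
    (A : ℕ → ℕ → ℝ)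
    (hA : ∀ i j : ℕ, A i j = ∑ n ∈ Finset.Icc (-(N : ℤ) / 2) ((N : ℤ) / 2),
      (n : ℝ) ^ i * (d / dn n) ^ (j + 2))
    -- phase gradient u(n,k) over (ψ, d, B)
    (u : ℤ → ℤ → Fin 3 → ℝ)
    (hu : ∀ n k : ℤ, u n k =
      ![-(lam / (2 * Real.pi)),
        (k : ℝ) * rf * (d - (n : ℝ) * Δ * Real.cos θ) / dn n,
        -((k : ℝ) * rf)])
    -- Fisher information sub-matrix with amplitude weights w_n = d/d_n
    (J : Matrix (Fin 3) (Fin 3) ℝ)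
    (hJ : ∀ p q : Fin 3, J p q = γ *
      ∑ n ∈ Finset.Icc (-(N : ℤ) / 2) ((N : ℤ) / 2),
        ∑ k ∈ Finset.Icc (-(K : ℤ) / 2) ((K : ℤ) / 2),
          (‖s k‖) ^ 2 * (d / dn n) ^ 2 * u n k p * u n k q) :
    J 0 0 = γ * (lam / (2 * Real.pi)) ^ 2 * EK0 * A 0 0 ∧
    J 0 1 = 0 ∧
    J 0 2 = 0 ∧
    J 1 1 = γ * EK2 * rf ^ 2 *
      (A 0 2 - 2 * (Δ / d) * Real.cos θ * A 1 2
        + (Δ ^ 2 / d ^ 2) * (Real.cos θ) ^ 2 * A 2 2) ∧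
    J 1 2 = -(γ * EK2 * rf ^ 2 * (A 0 1 - (Δ / d) * Real.cos θ * A 1 1)) ∧
    J 2 2 = γ * EK2 * rf ^ 2 * A 0 0 :=
  wideband_farfield_FIM_general K N hK s hs d θ Δ lam rf γ hd EK0 EK2 hEK0 hEK2 dn A hA u hu J hJ
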